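/- arXiv:2604.18526 — 2 statements merged into one kernel-verified Lean document; each statement's English description precedes it below -/
import Mathlib

section
/- Every formula of LET_F⁺ is semantically equivalent (same value under every six-valued valuation) to a formula in which the operators ∘ and • are applied only to propositional variables or are part of the constants ⊤ = ∘∘p and ⊥ = ••p, and negations apply only to variables. -/
/-- Triples over the two-element Boolean algebra. -/
abbrev B3 := Bool × Bool × Bool

/-- Membership in the domain B of the twist structure:
    z₃ ≤ z₁ ⊔ z₂ and z₁ ⊓ z₂ ⊓ z₃ = 0. -/
def memB (z : B3) : Prop := z.2.2 ≤ z.1 ⊔ z.2.1 ∧ z.1 ⊓ z.2.1 ⊓ z.2.2 = ⊥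

/-- Twist conjunction. -/
def tand (z w : B3) : B3 :=
  (z.1 ⊓ w.1, z.2.1 ⊔ w.2.1,
   (z.1 ⊓ z.2.2 ⊓ w.1 ⊓ w.2.2) ⊔ (z.2.1 ⊓ z.2.2) ⊔ (w.2.1 ⊓ w.2.2))

/-- Twist disjunction. -/
def tor (z w : B3) : B3 :=
  (z.1 ⊔ w.1, z.2.1 ⊓ w.2.1,
   (z.2.1 ⊓ z.2.2 ⊓ w.2.1 ⊓ w.2.2) ⊔ (z.1 ⊓ z.2.2) ⊔ (w.1 ⊓ w.2.2))

/-- Twist negation. -/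
def tneg (z : B3) : B3 := (z.2.1, z.1, z.2.2)

/-- Twist classicality operator. -/
def tcirc (z : B3) : B3 := (z.2.2, !z.2.2, true)

/-- Non-classicality operator •̃ = ¬̃ ∘ ∘̃. -/
def tbul (z : B3) : B3 := tneg (tcirc z)

/-- Designated values: first coordinate is 1. -/
def desig (z : B3) : Prop := z.1 = true

/-- Formulas of LET_F⁺ over propositional variables. -/
inductive Fm where
  | var : Nat → Fm
  | and : Fm → Fm → Fm
  | or : Fm → Fm → Fm
  | neg : Fm → Fm
  | circ : Fm → Fm

/-- Evaluation of a formula in the twist structure, given a valuation of variables. -/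
def Fm.eval (v : Nat → B3) : Fm → B3
  | .var n => v n
  | .and a b => tand (a.eval v) (b.eval v)
  | .or a b => tor (a.eval v) (b.eval v)
  | .neg a => tneg (a.eval v)
  | .circ a => tcirc (a.eval v)

/-- Normal-form formulas: conjunctions/disjunctions of generalized literals
    (variables, negated variables, ∘-variables, •-variables = ¬∘-variables)
    and of the constants ⊤ = ∘∘p and ⊥ = ••p = ¬∘¬∘p. -/
inductive NF : Fm → Prop where
  | var (n : Nat) : NF (.var n)
  | negvar (n : Nat) : NF (.neg (.var n))
  | circvar (n : Nat) : NF (.circ (.var n))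
  | bulvar (n : Nat) : NF (.neg (.circ (.var n)))
  | top (n : Nat) : NF (.circ (.circ (.var n)))
  | bot (n : Nat) : NF (.neg (.circ (.neg (.circ (.var n)))))
  | and {A B : Fm} : NF A → NF B → NF (.and A B)
  | or {A B : Fm} : NF A → NF B → NF (.or A B)


noncomputable instance (z : B3) : Decidable (memB z) := by
  unfold memB; exact instDecidableAnd

lemma memB_tand : ∀ z w, memB z → memB w → memB (tand z w) := by decide
lemma memB_tor : ∀ z w, memB z → memB w → memB (tor z w) := by decide
lemma memB_tneg : ∀ z, memB z → memB (tneg z) := by decide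
lemma memB_tcirc : ∀ z, memB (tcirc z) := by decide

lemma memB_eval (A : Fm) (v : Nat → B3) (h : ∀ n, memB (v n)) : memB (A.eval v) := by
  induction A with
  | var n => exact h n
  | and a b ha hb => exact memB_tand _ _ ha hb
  | or a b ha hb => exact memB_tor _ _ ha hb
  | neg a ha => exact memB_tneg _ ha
  | circ a _ => exact memB_tcirc _

lemma demorgan_and : ∀ z w : B3, tneg (tand z w) = tor (tneg z) (tneg w) := by decide
lemma demorgan_or : ∀ z w : B3, tneg (tor z w) = tand (tneg z) (tneg w) := by decide
lemma tneg_tneg : ∀ z : B3, tneg (tneg z) = z := by decide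
lemma neg_top_eq : ∀ z : B3, tneg (tcirc (tcirc z)) = tneg (tcirc (tneg (tcirc z))) := by decide
lemma neg_bot_eq : ∀ z : B3, tneg (tneg (tcirc (tneg (tcirc z)))) = tcirc (tcirc z) := by decide
lemma circ_tneg : ∀ z : B3, tcirc (tneg z) = tcirc z := by decide
lemma circ_bul : ∀ z : B3, tcirc (tneg (tcirc z)) = tcirc (tcirc z) := by decide
lemma circ_circ_circ : ∀ z : B3, tcirc (tcirc (tcirc z)) = tcirc (tcirc z) := by decide
lemma circ_bot : ∀ z : B3, tcirc (tneg (tcirc (tneg (tcirc z)))) = tcirc (tcirc z) := by decide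
lemma circ_and_eq : ∀ z w, memB z → memB w →
    tcirc (tand z w) = tor (tor (tand (tand (tcirc z) (tcirc w)) (tand z w))
      (tand (tcirc z) (tneg z))) (tand (tcirc w) (tneg w)) := by decide
lemma circ_or_eq : ∀ z w, memB z → memB w →
    tcirc (tor z w) = tor (tor (tand (tcirc z) z) (tand (tcirc w) w))
      (tand (tand (tcirc z) (tcirc w)) (tand (tneg z) (tneg w))) := by decide

/-- Negation of an NF formula has an NF equivalent (under all valuations). -/
lemma nfNeg : ∀ {B : Fm}, NF B → ∃ B', NF B' ∧ ∀ v : Nat → B3,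
    Fm.eval v (.neg B) = Fm.eval v B' := by
  intro B h
  induction h with
  | var n => exact ⟨.neg (.var n), .negvar n, fun v => rfl⟩
  | negvar n =>
      exact ⟨.var n, .var n, fun v => tneg_tneg _⟩
  | circvar n => exact ⟨.neg (.circ (.var n)), .bulvar n, fun v => rfl⟩
  | bulvar n =>
      exact ⟨.circ (.var n), .circvar n, fun v => tneg_tneg _⟩
  | top n =>
      exact ⟨.neg (.circ (.neg (.circ (.var n)))), .bot n, fun v => neg_top_eq _⟩
  | bot n =>
      exact ⟨.circ (.circ (.var n)), .top n, fun v => neg_bot_eq _⟩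
  | and hA hB ihA ihB =>
      obtain ⟨A', hA', eA⟩ := ihA
      obtain ⟨B', hB', eB⟩ := ihB
      refine ⟨.or A' B', .or hA' hB', fun v => ?_⟩
      simp only [Fm.eval] at *
      rw [demorgan_and, ← eA v, ← eB v]
  | or hA hB ihA ihB =>
      obtain ⟨A', hA', eA⟩ := ihA
      obtain ⟨B', hB', eB⟩ := ihB
      refine ⟨.and A' B', .and hA' hB', fun v => ?_⟩
      simp only [Fm.eval] at *
      rw [demorgan_or, ← eA v, ← eB v]

/-- ∘ of an NF formula has an NF equivalent (under memB valuations). -/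
lemma nfCirc : ∀ {B : Fm}, NF B → ∃ B', NF B' ∧ ∀ v : Nat → B3, (∀ n, memB (v n)) →
    Fm.eval v (.circ B) = Fm.eval v B' := by
  intro B h
  induction h with
  | var n => exact ⟨.circ (.var n), .circvar n, fun v _ => rfl⟩
  | negvar n =>
      exact ⟨.circ (.var n), .circvar n, fun v _ => circ_tneg _⟩
  | circvar n =>
      exact ⟨.circ (.circ (.var n)), .top n, fun v _ => rfl⟩
  | bulvar n =>
      exact ⟨.circ (.circ (.var n)), .top n, fun v _ => circ_bul _⟩
  | top n =>
      exact ⟨.circ (.circ (.var n)), .top n, fun v _ => circ_circ_circ _⟩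
  | bot n =>
      exact ⟨.circ (.circ (.var n)), .top n, fun v _ => circ_bot _⟩
  | @and A B hA hB ihA ihB =>
      obtain ⟨A', hA', eA⟩ := ihA
      obtain ⟨B', hB', eB⟩ := ihB
      obtain ⟨NA, hNA, eNA⟩ := nfNeg hA
      obtain ⟨NB, hNB, eNB⟩ := nfNeg hB
      refine ⟨.or (.or (.and (.and A' B') (.and A B)) (.and A' NA)) (.and B' NB),
        .or (.or (.and (.and hA' hB') (.and hA hB)) (.and hA' hNA)) (.and hB' hNB),
        fun v hv => ?_⟩
      have := circ_and_eq (A.eval v) (B.eval v) (memB_eval A v hv) (memB_eval B v hv)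
      simp only [Fm.eval] at *
      rw [this, ← eA v hv, ← eB v hv, ← eNA v, ← eNB v]
  | @or A B hA hB ihA ihB =>
      obtain ⟨A', hA', eA⟩ := ihA
      obtain ⟨B', hB', eB⟩ := ihB
      obtain ⟨NA, hNA, eNA⟩ := nfNeg hA
      obtain ⟨NB, hNB, eNB⟩ := nfNeg hB
      refine ⟨.or (.or (.and A' A) (.and B' B)) (.and (.and A' B') (.and NA NB)),
        .or (.or (.and hA' hA) (.and hB' hB)) (.and (.and hA' hB') (.and hNA hNB)),
        fun v hv => ?_⟩
      have := circ_or_eq (A.eval v) (B.eval v) (memB_eval A v hv) (memB_eval B v hv)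
      simp only [Fm.eval] at *
      rw [this, ← eA v hv, ← eB v hv, ← eNA v, ← eNB v]

theorem stmt17 (A : Fm) :
    ∃ B : Fm, NF B ∧ ∀ v : Nat → B3, (∀ n, memB (v n)) → A.eval v = B.eval v := by
  induction A with
  | var n => exact ⟨.var n, .var n, fun v _ => rfl⟩
  | and a b iha ihb =>
      obtain ⟨A', hA', eA⟩ := iha
      obtain ⟨B', hB', eB⟩ := ihb
      refine ⟨.and A' B', .and hA' hB', fun v hv => ?_⟩
      simp only [Fm.eval]; rw [eA v hv, eB v hv]
  | or a b iha ihb =>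
      obtain ⟨A', hA', eA⟩ := iha
      obtain ⟨B', hB', eB⟩ := ihb
      refine ⟨.or A' B', .or hA' hB', fun v hv => ?_⟩
      simp only [Fm.eval]; rw [eA v hv, eB v hv]
  | neg a iha =>
      obtain ⟨A', hA', eA⟩ := iha
      obtain ⟨B', hB', eB⟩ := nfNeg hA'
      refine ⟨B', hB', fun v hv => ?_⟩
      have := eB v
      simp only [Fm.eval] at *
      rw [eA v hv, this]
  | circ a iha =>
      obtain ⟨A', hA', eA⟩ := iha
      obtain ⟨B', hB', eB⟩ := nfCirc hA'
      refine ⟨B', hB', fun v hv => ?_⟩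
      have := eB v hv
      simp only [Fm.eval] at *
      rw [eA v hv, this]
end

section
/- Iteration of ¬, ∘, • collapses: for every z ∈ B and every finite sequence s₁,…,sₙ of operations from {¬̃, ∘̃, •̃}, the value s₁(s₂(⋯ sₙ(z)⋯)) equals one of: z, ¬̃ z, ∘̃ z, •̃ z, (1,0,1), or (0,1,1). -/
theorem stmt18 (z : B3) (hz : memB z) (l : List (B3 → B3))
    (hl : ∀ f ∈ l, f = tneg ∨ f = tcirc ∨ f = tbul) :
    l.foldr (fun f x => f x) z = z ∨
    l.foldr (fun f x => f x) z = tneg z ∨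
    l.foldr (fun f x => f x) z = tcirc z ∨
    l.foldr (fun f x => f x) z = tbul z ∨
    l.foldr (fun f x => f x) z = (true, false, true) ∨
    l.foldr (fun f x => f x) z = (false, true, true) := by
  induction l with
  | nil => left; rfl
  | cons f l ih =>
    have hf := hl f (by simp)
    have ih' := ih (fun g hg => hl g (by simp [hg]))
    obtain ⟨a, b, c⟩ := z
    simp only [List.foldr]
    rcases hf with rfl | rfl | rfl <;> rcases ih' with h | h | h | h | h | h <;>
      rw [h] <;> cases a <;> cases b <;> cases c <;> decide
end
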